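/- Uhlmann's theorem (rotated form): let ρ, σ be density operators on a finite-dimensional Hilbert space H_A and let ψ_ρ, ψ_σ ∈ H_A ⊗ H_R be any fixed purifications of ρ and σ respectively (with H_R ≅ H_A). Then the fidelity satisfies f(ρ,σ) = max over unitaries U on H_R of |⟨ψ_ρ, (1_A ⊗ U) ψ_σ⟩|. -/

import Mathlib

open scoped Kronecker Matrix.Norms.L2Operator ComplexOrder
open Matrix Classical

namespace QI

/-- Total matrix square root: the positive square root for positive semidefinite
matrices, junk value `0` otherwise. -/
noncomputable def msqrt {n : Type*} [Fintype n] [DecidableEq n] (A : Matrix n n ℂ) :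
    Matrix n n ℂ :=
  if h : A.PosSemidef then
    (h.1.eigenvectorUnitary : Matrix n n ℂ) * diagonal ((↑) ∘ Real.sqrt ∘ h.1.eigenvalues)
      * (star h.1.eigenvectorUnitary : Matrix n n ℂ) else 0

/-- Trace norm `‖X‖₁ = tr √(Xᴴ X)`. -/
noncomputable def traceNorm {n : Type*} [Fintype n] [DecidableEq n] (X : Matrix n n ℂ) : ℝ :=
  (msqrt (Xᴴ * X)).trace.re

/-- Fidelity `f(ρ,σ) = tr √(√ρ σ √ρ)`. -/
noncomputable def fid {n : Type*} [Fintype n] [DecidableEq n] (ρ σ : Matrix n n ℂ) : ℝ :=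
  (msqrt (msqrt ρ * σ * msqrt ρ)).trace.re

/-- Amplification `id_k ⊗ Φ` of a map between matrix algebras. -/
noncomputable def amp {nB nA : ℕ} (k : ℕ)
    (Φ : Matrix (Fin nB) (Fin nB) ℂ →ₗ[ℂ] Matrix (Fin nA) (Fin nA) ℂ) :
    Matrix (Fin k × Fin nB) (Fin k × Fin nB) ℂ →ₗ[ℂ]
      Matrix (Fin k × Fin nA) (Fin k × Fin nA) ℂ where
  toFun X := Matrix.of fun p q => Φ (Matrix.of fun a b => X (p.1, a) (q.1, b)) p.2 q.2
  map_add' X Y := by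
    ext p q
    have h : (Matrix.of fun a b => (X + Y) (p.1, a) (q.1, b))
        = (Matrix.of fun a b => X (p.1, a) (q.1, b))
          + Matrix.of fun a b => Y (p.1, a) (q.1, b) := by
      ext a b; simp
    show Φ (Matrix.of fun a b => (X + Y) (p.1, a) (q.1, b)) p.2 q.2
      = Φ (Matrix.of fun a b => X (p.1, a) (q.1, b)) p.2 q.2
        + Φ (Matrix.of fun a b => Y (p.1, a) (q.1, b)) p.2 q.2
    rw [h, map_add]; rfl
  map_smul' c X := by
    ext p q
    have h : (Matrix.of fun a b => (c • X) (p.1, a) (q.1, b))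
        = c • Matrix.of fun a b => X (p.1, a) (q.1, b) := by
      ext a b; simp
    show Φ (Matrix.of fun a b => (c • X) (p.1, a) (q.1, b)) p.2 q.2
      = (c • Φ (Matrix.of fun a b => X (p.1, a) (q.1, b))) p.2 q.2
    rw [h, _root_.map_smul]

/-- Operator norm of a linear map between matrix spaces, each equipped with the
ℓ²-operator norm. -/
noncomputable def opNorm {m n : Type*} [Fintype m] [Fintype n] [DecidableEq m] [DecidableEq n]
    (Φ : Matrix m m ℂ →ₗ[ℂ] Matrix n n ℂ) : ℝ :=
  ‖LinearMap.toContinuousLinearMap Φ‖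

/-- The norm of complete boundedness `‖Φ‖_cb = sup_k ‖id_k ⊗ Φ‖`. -/
noncomputable def cbNorm {nB nA : ℕ}
    (Φ : Matrix (Fin nB) (Fin nB) ℂ →ₗ[ℂ] Matrix (Fin nA) (Fin nA) ℂ) : ℝ :=
  ⨆ k : ℕ, opNorm (amp k Φ)

/-- Complete positivity. -/
def IsCP {nB nA : ℕ}
    (Φ : Matrix (Fin nB) (Fin nB) ℂ →ₗ[ℂ] Matrix (Fin nA) (Fin nA) ℂ) : Prop :=
  ∀ (k : ℕ) (X : Matrix (Fin k × Fin nB) (Fin k × Fin nB) ℂ),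
    X.PosSemidef → (amp k Φ X).PosSemidef

/-- The (Heisenberg picture) channel `T(b) = Vᴴ (b ⊗ 1_E) V` defined by a Stinespring
operator `V : H_A → H_B ⊗ H_E`. -/
noncomputable def stine {nA nB nE : ℕ} (V : Matrix (Fin nB × Fin nE) (Fin nA) ℂ) :
    Matrix (Fin nB) (Fin nB) ℂ →ₗ[ℂ] Matrix (Fin nA) (Fin nA) ℂ where
  toFun b := Vᴴ * (b ⊗ₖ (1 : Matrix (Fin nE) (Fin nE) ℂ)) * V
  map_add' b c := by simp [Matrix.add_kronecker, Matrix.add_mul, Matrix.mul_add]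
  map_smul' c b := by simp [Matrix.smul_kronecker, Matrix.smul_mul, Matrix.mul_smul]

/-- The complementary channel `T_E(e) = Vᴴ (1_B ⊗ e) V`. -/
noncomputable def stineC {nA nB nE : ℕ} (V : Matrix (Fin nB × Fin nE) (Fin nA) ℂ) :
    Matrix (Fin nE) (Fin nE) ℂ →ₗ[ℂ] Matrix (Fin nA) (Fin nA) ℂ where
  toFun e := Vᴴ * ((1 : Matrix (Fin nB) (Fin nB) ℂ) ⊗ₖ e) * V
  map_add' b c := by simp [Matrix.kronecker_add, Matrix.add_mul, Matrix.mul_add]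
  map_smul' c b := by simp [Matrix.kronecker_smul, Matrix.smul_mul, Matrix.mul_smul]

/-- The Schrödinger (trace-duality) adjoint `Φ_*`, determined by
`tr (Φ_*(ρ) b) = tr (ρ Φ(b))`. -/
noncomputable def dualMap {nB nA : ℕ}
    (Φ : Matrix (Fin nB) (Fin nB) ℂ →ₗ[ℂ] Matrix (Fin nA) (Fin nA) ℂ) :
    Matrix (Fin nA) (Fin nA) ℂ →ₗ[ℂ] Matrix (Fin nB) (Fin nB) ℂ where
  toFun ρ := Matrix.of fun i j => (ρ * Φ (Matrix.single j i 1)).trace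
  map_add' ρ τ := by ext i j; simp [Matrix.add_mul]
  map_smul' c ρ := by ext i j; simp [Matrix.smul_mul]

/-- Outer product `|ψ⟩⟨ψ|`. -/
def outer {n : Type*} (ψ : n → ℂ) : Matrix n n ℂ :=
  Matrix.vecMulVec ψ (star ψ)

/-- Partial trace over the second tensor factor. -/
noncomputable def ptrace2 {a e : Type*} [Fintype e] (M : Matrix (a × e) (a × e) ℂ) : Matrix a a ℂ :=
  Matrix.of fun i j => ∑ k, M (i, k) (j, k)

/-- Partial trace over the first tensor factor. -/
noncomputable def ptrace1 {a e : Type*} [Fintype a] (M : Matrix (a × e) (a × e) ℂ) : Matrix e e ℂ :=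
  Matrix.of fun i j => ∑ k, M (k, i) (k, j)

/-- The Schrödinger picture channel `T_*(ρ) = tr_E (V ρ Vᴴ)`. -/
noncomputable def schrod {nA nB nE : ℕ} (V : Matrix (Fin nB × Fin nE) (Fin nA) ℂ) :
    Matrix (Fin nA) (Fin nA) ℂ →ₗ[ℂ] Matrix (Fin nB) (Fin nB) ℂ where
  toFun ρ := ptrace2 (V * ρ * Vᴴ)
  map_add' ρ τ := by
    ext i j
    simp [ptrace2, Matrix.add_mul, Matrix.mul_add, Finset.sum_add_distrib]
  map_smul' c ρ := by
    ext i j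
    simp [ptrace2, Matrix.smul_mul, Matrix.mul_smul, Finset.mul_sum]

/-- Completely depolarizing channel `S(e) = tr(σ e) 1_A` (Heisenberg picture). -/
noncomputable def depol {nE nA : ℕ} (σ : Matrix (Fin nE) (Fin nE) ℂ) :
    Matrix (Fin nE) (Fin nE) ℂ →ₗ[ℂ] Matrix (Fin nA) (Fin nA) ℂ where
  toFun e := (σ * e).trace • 1
  map_add' e f := by simp [Matrix.mul_add, add_smul]
  map_smul' c e := by simp [Matrix.mul_smul, smul_smul]

/-- The transpose map `Θ(e) = eᵀ`. -/
def transposeMap (ν : ℕ) : Matrix (Fin ν) (Fin ν) ℂ →ₗ[ℂ] Matrix (Fin ν) (Fin ν) ℂ where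
  toFun e := eᵀ
  map_add' := by intros; simp
  map_smul' := by intros; simp

/-- The maximally depolarizing channel `S(e) = (1/ν) tr(e) 1`. -/
noncomputable def depolS (ν : ℕ) :
    Matrix (Fin ν) (Fin ν) ℂ →ₗ[ℂ] Matrix (Fin ν) (Fin ν) ℂ :=
  depol ((ν : ℂ)⁻¹ • (1 : Matrix (Fin ν) (Fin ν) ℂ))

/-- `T_p = (1-p) S + p Θ`. -/
noncomputable def Tp (ν : ℕ) (p : ℝ) :
    Matrix (Fin ν) (Fin ν) ℂ →ₗ[ℂ] Matrix (Fin ν) (Fin ν) ℂ :=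
  (((1 - p : ℝ) : ℂ)) • depolS ν + ((p : ℝ) : ℂ) • transposeMap ν

/-- The flip (swap) operator `F = Σ_{i,j} |i,j⟩⟨j,i|`. -/
def flipOp (ν : ℕ) : Matrix (Fin ν × Fin ν) (Fin ν × Fin ν) ℂ :=
  Matrix.of fun p q => if p.1 = q.2 ∧ p.2 = q.1 then 1 else 0

/-- Amplification on the right factor: `Φ ⊗ id_k`. -/
noncomputable def ampL {nB nA : ℕ} (k : ℕ)
    (Φ : Matrix (Fin nB) (Fin nB) ℂ →ₗ[ℂ] Matrix (Fin nA) (Fin nA) ℂ) :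
    Matrix (Fin nB × Fin k) (Fin nB × Fin k) ℂ →ₗ[ℂ]
      Matrix (Fin nA × Fin k) (Fin nA × Fin k) ℂ where
  toFun X := Matrix.of fun p q => Φ (Matrix.of fun a b => X (a, p.2) (b, q.2)) p.1 q.1
  map_add' X Y := by
    ext p q
    have h : (Matrix.of fun a b => (X + Y) (a, p.2) (b, q.2))
        = (Matrix.of fun a b => X (a, p.2) (b, q.2))
          + Matrix.of fun a b => Y (a, p.2) (b, q.2) := by
      ext a b; simp
    show Φ (Matrix.of fun a b => (X + Y) (a, p.2) (b, q.2)) p.1 q.1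
      = Φ (Matrix.of fun a b => X (a, p.2) (b, q.2)) p.1 q.1
        + Φ (Matrix.of fun a b => Y (a, p.2) (b, q.2)) p.1 q.1
    rw [h, map_add]; rfl
  map_smul' c X := by
    ext p q
    have h : (Matrix.of fun a b => (c • X) (a, p.2) (b, q.2))
        = c • Matrix.of fun a b => X (a, p.2) (b, q.2) := by
      ext a b; simp
    show Φ (Matrix.of fun a b => (c • X) (a, p.2) (b, q.2)) p.1 q.1
      = (c • Φ (Matrix.of fun a b => X (a, p.2) (b, q.2))) p.1 q.1
    rw [h, _root_.map_smul]

/-- Operational fidelity of two channels. -/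
noncomputable def opFid {nA nB : ℕ}
    (T₁ T₂ : Matrix (Fin nB) (Fin nB) ℂ →ₗ[ℂ] Matrix (Fin nA) (Fin nA) ℂ) : ℝ :=
  ⨅ ψ : {ψ : Fin nA × Fin nA → ℂ // ∑ x, ‖ψ x‖ ^ 2 = 1},
    fid (amp nA (dualMap T₁) (outer ψ.1)) (amp nA (dualMap T₂) (outer ψ.1))

/-- Minimality of a Stinespring representation. -/
def Minimal {nA nB nE : ℕ} (V : Matrix (Fin nB × Fin nE) (Fin nA) ℂ) : Prop :=
  Submodule.span ℂ {x : Fin nB × Fin nE → ℂ |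
    ∃ (b : Matrix (Fin nB) (Fin nB) ℂ) (φ : Fin nA → ℂ),
      x = (b ⊗ₖ (1 : Matrix (Fin nE) (Fin nE) ℂ)).mulVec (V.mulVec φ)} = ⊤


/- Write the purifications `ψρ, ψσ` as their `nA × nR` coefficient matrices `X, Y`. Then
`ρ = X Xᴴ`, `σ = Y Yᴴ` and `⟨ψρ, (1 ⊗ U) ψσ⟩ = tr (Xᴴ Y Uᵀ)`. Since `tr √(B Bᴴ) = tr √(Bᴴ B)` for
every rectangular `B`, taking `B = √ρ Y` gives `f(ρ, σ) = tr √(Mᴴ M) = ‖M‖₁` with `M = Xᴴ Y`.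
The theorem is then the variational formula `‖M‖₁ = max_U |tr (M U)|`, which follows from the
singular value decomposition of `M`. -/

section SquareRoot

variable {n : Type*} [Fintype n] [DecidableEq n] {A : Matrix n n ℂ}

open scoped MatrixOrder in
lemma msqrt_eq_cfcSqrt (hA : A.PosSemidef) : msqrt A = CFC.sqrt A := by
  rw [CFC.sqrt_eq_real_sqrt A hA.nonneg, cfcₙ_eq_cfc, hA.1.cfc_eq, msqrt, dif_pos hA]
  rfl

open scoped MatrixOrder in
lemma posSemidef_msqrt (hA : A.PosSemidef) : (msqrt A).PosSemidef :=
  (msqrt_eq_cfcSqrt hA ▸ CFC.sqrt_nonneg A).posSemidef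

open scoped MatrixOrder in
lemma msqrt_mul_msqrt (hA : A.PosSemidef) : msqrt A * msqrt A = A := by
  rw [msqrt_eq_cfcSqrt hA, CFC.sqrt_mul_sqrt_self A hA.nonneg]

open scoped MatrixOrder in
lemma msqrt_unique {Q : Matrix n n ℂ} (hQ : Q.PosSemidef) (h : Q * Q = A) : msqrt A = Q := by
  have hA : A.PosSemidef := by
    simpa only [← h, hQ.1.eq] using posSemidef_conjTranspose_mul_self Q
  rw [msqrt_eq_cfcSqrt hA, CFC.sqrt_unique h hQ.nonneg]

lemma trace_msqrt (hA : A.PosSemidef) :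
    (msqrt A).trace = ∑ i, (√(hA.1.eigenvalues i) : ℂ) := by
  rw [msqrt, dif_pos hA, trace_mul_cycle, Unitary.coe_star_mul_self, one_mul, trace_diagonal]
  rfl

end SquareRoot

section Gram

variable {m n : Type*} [Fintype m] [DecidableEq n] {C : Matrix m n ℂ} {d : n → ℝ}

lemma apply_eq_zero_of_gram (hC : Cᴴ * C = diagonal fun i => (d i : ℂ)) {i : n} (hi : d i = 0)
    (x : m) : C x i = 0 := by
  have hii := congr_fun₂ hC i i
  rw [mul_apply', diagonal_apply_eq, hi, Complex.ofReal_zero] at hii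
  exact congr_fun (dotProduct_star_self_eq_zero.mp hii) x

lemma inner_columns_of_gram (hC : Cᴴ * C = diagonal fun i => (d i : ℂ)) (i j : n) :
    inner ℂ (WithLp.toLp 2 fun x => C x i : EuclideanSpace ℂ m) (WithLp.toLp 2 fun x => C x j)
      = if i = j then (d i : ℂ) else 0 := by
  have hij := congr_fun₂ hC i j
  rw [mul_apply', diagonal_apply] at hij
  rwa [EuclideanSpace.inner_toLp_toLp, dotProduct_comm]

variable [Fintype n]

lemma mul_diagonal_eq_self_of_gram (hC : Cᴴ * C = diagonal fun i => (d i : ℂ)) {e : n → ℂ}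
    (he : ∀ i, d i ≠ 0 → e i = 1) : C * diagonal e = C := by
  ext x i
  rw [mul_diagonal]
  by_cases hi : d i = 0
  · rw [apply_eq_zero_of_gram hC hi, zero_mul]
  · rw [he i hi, mul_one]

/-- Since `(√0)⁻¹ = 0`, the middle factor is only a pseudo-inverse of `√(Cᴴ C)`; this is harmless
because the columns of `C` with `d i = 0` vanish. -/
lemma msqrt_mul_conjTranspose_of_gram [DecidableEq m] (hC : Cᴴ * C = diagonal fun i => (d i : ℂ))
    (hd : ∀ i, 0 ≤ d i) :
    msqrt (C * Cᴴ) = C * diagonal (fun i => (((√(d i))⁻¹ : ℝ) : ℂ)) * Cᴴ := by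
  set t : n → ℂ := fun i => (((√(d i))⁻¹ : ℝ) : ℂ) with ht
  refine msqrt_unique ?_ ?_
  · refine (posSemidef_diagonal_iff.mpr fun i => ?_).mul_mul_conjTranspose_same C
    exact Complex.zero_le_real.mpr (inv_nonneg.mpr (Real.sqrt_nonneg (d i)))
  · have hunit : ∀ i, d i ≠ 0 → t i * d i * t i = 1 := fun i hi => by
      have hs : √(d i) ≠ 0 := Real.sqrt_ne_zero'.mpr ((hd i).lt_of_ne' hi)
      simp only [ht]
      exact_mod_cast show (√(d i))⁻¹ * d i * (√(d i))⁻¹ = 1 by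
        rw [inv_mul_eq_div, Real.div_sqrt, mul_inv_cancel₀ hs]
    calc C * diagonal t * Cᴴ * (C * diagonal t * Cᴴ)
        = C * (diagonal t * (Cᴴ * C) * diagonal t) * Cᴴ := by simp only [Matrix.mul_assoc]
      _ = C * Cᴴ := by
        rw [hC, diagonal_mul_diagonal, diagonal_mul_diagonal,
          mul_diagonal_eq_self_of_gram hC hunit]

lemma trace_msqrt_mul_conjTranspose_of_gram [DecidableEq m]
    (hC : Cᴴ * C = diagonal fun i => (d i : ℂ)) (hd : ∀ i, 0 ≤ d i) :
    (msqrt (C * Cᴴ)).trace = ∑ i, (√(d i) : ℂ) := by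
  rw [msqrt_mul_conjTranspose_of_gram hC hd, trace_mul_cycle, hC, diagonal_mul_diagonal,
    trace_diagonal]
  refine Finset.sum_congr rfl fun i _ => ?_
  exact_mod_cast show d i * (√(d i))⁻¹ = √(d i) by rw [← div_eq_mul_inv, Real.div_sqrt]

lemma conjTranspose_mul_self_mul_eigenvectorUnitary {B : Matrix m n ℂ}
    (hB : (Bᴴ * B).IsHermitian) :
    (B * (hB.eigenvectorUnitary : Matrix n n ℂ))ᴴ * (B * (hB.eigenvectorUnitary : Matrix n n ℂ))
      = diagonal fun i => (hB.eigenvalues i : ℂ) := by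
  have h := hB.conjStarAlgAut_star_eigenvectorUnitary
  rw [Unitary.conjStarAlgAut_apply, Unitary.coe_star, star_star, star_eq_conjTranspose] at h
  rw [conjTranspose_mul, Matrix.mul_assoc, ← Matrix.mul_assoc Bᴴ, ← Matrix.mul_assoc]
  exact h

lemma trace_msqrt_mul_conjTranspose [DecidableEq m] (B : Matrix m n ℂ) :
    (msqrt (B * Bᴴ)).trace = (msqrt (Bᴴ * B)).trace := by
  have hA := posSemidef_conjTranspose_mul_self B
  set V : Matrix n n ℂ := (hA.1.eigenvectorUnitary : Matrix n n ℂ)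
  have hBV : B * V * (B * V)ᴴ = B * Bᴴ := by
    rw [conjTranspose_mul, Matrix.mul_assoc, ← Matrix.mul_assoc _ _ Bᴴ, ← star_eq_conjTranspose,
      Unitary.mul_star_self_of_mem hA.1.eigenvectorUnitary.2, Matrix.one_mul]
  have hC := conjTranspose_mul_self_mul_eigenvectorUnitary hA.1
  rw [← hBV, trace_msqrt_mul_conjTranspose_of_gram hC hA.eigenvalues_nonneg, trace_msqrt hA]

end Gram

section TraceNorm

variable {n : Type*} [Fintype n] [DecidableEq n]

/-- The normalised nonzero columns of `C` are orthonormal; completing them to an orthonormal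
basis gives the columns of `W`. -/
lemma exists_unitary_eq_mul_diagonal_sqrt_of_gram {C : Matrix n n ℂ} {d : n → ℝ}
    (hC : Cᴴ * C = diagonal fun i => (d i : ℂ)) (hd : ∀ i, 0 ≤ d i) :
    ∃ W ∈ unitaryGroup n ℂ, C = W * diagonal fun i => (√(d i) : ℂ) := by
  have hs : ∀ i, d i ≠ 0 → (√(d i) : ℂ) ≠ 0 := fun i hi => by
    exact_mod_cast Real.sqrt_ne_zero'.mpr ((hd i).lt_of_ne' hi)
  let v : n → EuclideanSpace ℂ n := fun i => (√(d i) : ℂ)⁻¹ • WithLp.toLp 2 fun x => C x i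
  have hv : Orthonormal ℂ (Set.domRestrict {i | d i ≠ 0} v) := by
    rw [orthonormal_iff_ite]
    rintro ⟨i, hi⟩ ⟨j, hj⟩
    simp only [Set.domRestrict_apply, v, inner_smul_left, inner_smul_right,
      inner_columns_of_gram hC, Subtype.mk.injEq]
    split_ifs with hij
    · subst hij
      have hdi : (d i : ℂ) = √(d i) * √(d i) := by
        exact_mod_cast (Real.mul_self_sqrt (hd i)).symm
      rw [hdi, Complex.conj_inv, Complex.conj_ofReal]
      field_simp [hs i hi]
    · simp
  obtain ⟨b, hb⟩ := hv.exists_orthonormalBasis_extension_of_card_eq finrank_euclideanSpace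
  refine ⟨(EuclideanSpace.basisFun n ℂ).toBasis.toMatrix b,
    (EuclideanSpace.basisFun n ℂ).toMatrix_orthonormalBasis_mem_unitary b, ?_⟩
  ext x i
  rw [mul_diagonal]
  change C x i = b i x * _
  by_cases hi : d i = 0
  · rw [apply_eq_zero_of_gram hC hi, hi, Real.sqrt_zero, Complex.ofReal_zero, mul_zero]
  · rw [hb i hi]
    simp only [v, WithLp.ofLp_smul, Pi.smul_apply, smul_eq_mul]
    field_simp [hs i hi]

lemma norm_trace_diagonal_mul_unitary_le {s : n → ℝ} (hs : ∀ i, 0 ≤ s i) {G : Matrix n n ℂ}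
    (hG : G ∈ unitaryGroup n ℂ) : ‖(diagonal (fun i => (s i : ℂ)) * G).trace‖ ≤ ∑ i, s i := by
  refine (norm_sum_le _ _).trans (Finset.sum_le_sum fun i _ => ?_)
  rw [diag_apply, diagonal_mul, norm_mul, Complex.norm_real, Real.norm_of_nonneg (hs i)]
  exact mul_le_of_le_one_right (hs i) (entry_norm_bound_of_unitary hG i i)

lemma traceNorm_eq_sum_sqrt_eigenvalues (M : Matrix n n ℂ) :
    traceNorm M = ∑ i, √((posSemidef_conjTranspose_mul_self M).1.eigenvalues i) := by
  rw [traceNorm, trace_msqrt (posSemidef_conjTranspose_mul_self M)]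
  exact_mod_cast Complex.ofReal_re _

/-- By the singular value decomposition `M = W D Vᴴ` this reduces to the diagonal case, where
unitaries have entries of modulus at most one. -/
lemma isGreatest_norm_trace_mul_unitary (M : Matrix n n ℂ) :
    IsGreatest {r : ℝ | ∃ U ∈ unitaryGroup n ℂ, r = ‖(M * U).trace‖} (traceNorm M) := by
  have hA := posSemidef_conjTranspose_mul_self M
  set V : Matrix n n ℂ := (hA.1.eigenvectorUnitary : Matrix n n ℂ)
  set D : Matrix n n ℂ := diagonal fun i => (√(hA.1.eigenvalues i) : ℂ)
  obtain ⟨W, hW, hMV⟩ := exists_unitary_eq_mul_diagonal_sqrt_of_gram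
    (conjTranspose_mul_self_mul_eigenvectorUnitary hA.1) hA.eigenvalues_nonneg
  have hM : M = W * D * star V := by
    rw [← hMV, Matrix.mul_assoc, Unitary.mul_star_self_of_mem hA.1.eigenvectorUnitary.2,
      Matrix.mul_one]
  have htrace : ∀ U, (M * U).trace = (D * (star V * U * W)).trace := fun U => by
    rw [hM]
    simp only [Matrix.mul_assoc]
    rw [trace_mul_comm W]
    simp only [Matrix.mul_assoc]
  refine ⟨⟨V * star W, mul_mem hA.1.eigenvectorUnitary.2 (Unitary.star_mem hW), ?_⟩, ?_⟩
  · have hVW : star V * (V * star W) * W = 1 := by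
      rw [← Matrix.mul_assoc, Unitary.star_mul_self_of_mem hA.1.eigenvectorUnitary.2,
        Matrix.one_mul, Unitary.star_mul_self_of_mem hW]
    rw [htrace, hVW, Matrix.mul_one, trace_diagonal, ← Complex.ofReal_sum, Complex.norm_real,
      Real.norm_of_nonneg (Finset.sum_nonneg fun i _ => Real.sqrt_nonneg _),
      traceNorm_eq_sum_sqrt_eigenvalues]
  · rintro r ⟨U, hU, rfl⟩
    rw [htrace, traceNorm_eq_sum_sqrt_eigenvalues]
    exact norm_trace_diagonal_mul_unitary_le (fun i => Real.sqrt_nonneg _)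
      (mul_mem (mul_mem (Unitary.star_mem hA.1.eigenvectorUnitary.2) hU) hW)

end TraceNorm

lemma fid_mul_conjTranspose {m n : Type*} [Fintype m] [Fintype n] [DecidableEq m]
    [DecidableEq n] (X Y : Matrix n m ℂ) :
    fid (X * Xᴴ) (Y * Yᴴ) = traceNorm (Xᴴ * Y) := by
  have hρ := posSemidef_self_mul_conjTranspose X
  set R := msqrt (X * Xᴴ)
  have hR : Rᴴ = R := (posSemidef_msqrt hρ).1.eq
  have hsandwich : R * (Y * Yᴴ) * R = R * Y * (R * Y)ᴴ := by
    rw [conjTranspose_mul, hR]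
    simp only [Matrix.mul_assoc]
  have hgram : (R * Y)ᴴ * (R * Y) = (Xᴴ * Y)ᴴ * (Xᴴ * Y) := by
    rw [conjTranspose_mul, conjTranspose_mul, conjTranspose_conjTranspose, hR,
      Matrix.mul_assoc, ← Matrix.mul_assoc R, msqrt_mul_msqrt hρ]
    simp only [Matrix.mul_assoc]
  rw [fid, traceNorm, hsandwich, trace_msqrt_mul_conjTranspose, hgram]

section Purification

variable {n m : Type*} [Fintype m]

lemma ptrace2_outer (ψ : n × m → ℂ) :
    ptrace2 (outer ψ) = of (Function.curry ψ) * (of (Function.curry ψ))ᴴ := by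
  ext i j
  simp [ptrace2, outer, mul_apply, vecMulVec_apply]

lemma sum_conj_mul_one_kronecker_mulVec [Fintype n] [DecidableEq n] (ψ φ : n × m → ℂ)
    (U : Matrix m m ℂ) :
    ∑ x, starRingEnd ℂ (ψ x) * ((1 ⊗ₖ U) *ᵥ φ) x
      = ((of (Function.curry ψ))ᴴ * of (Function.curry φ) * Uᵀ).trace := by
  simp only [mulVec, dotProduct, kroneckerMap_apply, one_apply, ite_mul, one_mul, zero_mul,
    Fintype.sum_prod_type, Finset.sum_ite_irrel, Finset.sum_const_zero, Finset.sum_ite_eq,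
    Finset.mem_univ, ↓reduceIte, Finset.mul_sum, trace, diag_apply, mul_apply,
    conjTranspose_apply, of_apply, Function.curry_apply, RCLike.star_def, transpose_apply,
    Finset.sum_mul]
  rw [Finset.sum_comm]
  refine Finset.sum_congr rfl fun k _ => ?_
  rw [Finset.sum_comm]
  refine Finset.sum_congr rfl fun l _ => Finset.sum_congr rfl fun i _ => ?_
  ring

end Purification

theorem uhlmann_rotated_general {nA nR : ℕ}
    (ρ σ : Matrix (Fin nA) (Fin nA) ℂ)
    (ψρ ψσ : Fin nA × Fin nR → ℂ)
    (hψρ : ptrace2 (outer ψρ) = ρ) (hψσ : ptrace2 (outer ψσ) = σ) :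
    IsGreatest {r : ℝ | ∃ U ∈ Matrix.unitaryGroup (Fin nR) ℂ,
        r = ‖(∑ x, (starRingEnd ℂ) (ψρ x)
          * (((1 : Matrix (Fin nA) (Fin nA) ℂ) ⊗ₖ U).mulVec ψσ) x)‖} (fid ρ σ) := by
  subst hψρ hψσ
  rw [ptrace2_outer, ptrace2_outer, fid_mul_conjTranspose]
  convert isGreatest_norm_trace_mul_unitary ((of (Function.curry ψρ))ᴴ * of (Function.curry ψσ))
    using 1
  ext r
  simp only [sum_conj_mul_one_kronecker_mulVec]
  constructor
  · rintro ⟨U, hU, rfl⟩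
    exact ⟨Uᵀ, transpose_mem_unitaryGroup_iff.mpr hU, rfl⟩
  · rintro ⟨U, hU, rfl⟩
    exact ⟨Uᵀ, transpose_mem_unitaryGroup_iff.mpr hU, by rw [transpose_transpose]⟩

theorem uhlmann_rotated {nA nR : ℕ}
    (ρ σ : Matrix (Fin nA) (Fin nA) ℂ) (hρ : ρ.PosSemidef) (hσ : σ.PosSemidef)
    (hρ1 : ρ.trace = 1) (hσ1 : σ.trace = 1)
    (ψρ ψσ : Fin nA × Fin nR → ℂ)
    (hψρ : ptrace2 (outer ψρ) = ρ) (hψσ : ptrace2 (outer ψσ) = σ) :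
    IsGreatest {r : ℝ | ∃ U ∈ Matrix.unitaryGroup (Fin nR) ℂ,
        r = ‖(∑ x, (starRingEnd ℂ) (ψρ x)
          * (((1 : Matrix (Fin nA) (Fin nA) ℂ) ⊗ₖ U).mulVec ψσ) x)‖} (fid ρ σ) :=
  uhlmann_rotated_general ρ σ ψρ ψσ hψρ hψσ

end QI
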